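/- arXiv:1912.03190 — 3 statements merged into one kernel-verified Lean document; each statement's English description precedes it below -/
import Mathlib

section
/- Let φ: 𝔻 → 𝔻 be analytic and not constant, and let z₀ ∈ 𝔻 with φ'(z₀) ≠ 0. Then the mixed second partial derivative of log|D_φ| at z₀ satisfies ∂²log|D_φ|/∂z∂z̄ (z₀) = -(1-|D_φ(z₀)|²)/(1-|z₀|²)². In particular, log(1/|D_φ|) is subharmonic on the set where φ' ≠ 0 (since |D_φ| ≤ 1 by the Schwarz–Pick lemma). -/
open Complex Metric Set Filter Asymptotics Topology

/-- The hyperbolic derivative `D_φ(z) = (1-|z|²) φ'(z) / (1-|φ(z)|²)`. -/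
noncomputable def Dh (φ : ℂ → ℂ) (z : ℂ) : ℂ :=
  (1 - (‖z‖ : ℂ)^2) * deriv φ z / (1 - (‖φ z‖ : ℂ)^2)

/-- The second order operator
`A_φ(z) = ((1-|z|²)/2) φ''/φ' - z̄ + (1-|z|²) conj(φ(z)) φ'(z)/(1-|φ(z)|²)`. -/
noncomputable def Ah (φ : ℂ → ℂ) (z : ℂ) : ℂ :=
  ((1 - (‖z‖ : ℂ)^2) / 2) * (deriv (deriv φ) z / deriv φ z) - (starRingEnd ℂ) z
    + (1 - (‖z‖ : ℂ)^2) * (starRingEnd ℂ) (φ z) * deriv φ z / (1 - (‖φ z‖ : ℂ)^2)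

/-- The Schwarzian derivative `S_φ = φ'''/φ' - (3/2)(φ''/φ')²`. -/
noncomputable def Sh (φ : ℂ → ℂ) (z : ℂ) : ℂ :=
  deriv (deriv (deriv φ)) z / deriv φ z - (3/2) * (deriv (deriv φ) z / deriv φ z)^2

/-- Wirtinger derivative `∂/∂z`. -/
noncomputable def wDz (f : ℂ → ℂ) (z : ℂ) : ℂ :=
  (fderiv ℝ f z 1 - Complex.I * fderiv ℝ f z Complex.I) / 2

/-- Wirtinger derivative `∂/∂z̄`. -/
noncomputable def wDzbar (f : ℂ → ℂ) (z : ℂ) : ℂ :=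
  (fderiv ℝ f z 1 + Complex.I * fderiv ℝ f z Complex.I) / 2

/-! Where `φ' ≠ 0`, `log |D_φ| = log (1 - |z|²) + log |φ'| - log (1 - |φ|²)`. The middle term is
harmonic, and for holomorphic `g` with `|g| ≠ 1` one has
`∂∂̄ log (1 - |g|²) = -|g'|² / (1 - |g|²)²`. Taking `g = z` and `g = φ` gives
`-1 / (1 - |z|²)² + |φ'|² / (1 - |φ|²)² = -(1 - |D_φ|²) / (1 - |z|²)²`. -/

open ComplexConjugate

noncomputable def wirtingerCLM (a b : ℂ) : ℂ →L[ℝ] ℂ :=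
  a • ContinuousLinearMap.id ℝ ℂ + b • (conjCLE : ℂ →L[ℝ] ℂ)

@[simp]
lemma wirtingerCLM_apply (a b v : ℂ) : wirtingerCLM a b v = a * v + b * conj v := by
  simp [wirtingerCLM]

/-- `f` is real differentiable at `z` with `∂f/∂z = a` and `∂f/∂z̄ = b`. -/
def HasWirtingerAt (f : ℂ → ℂ) (a b z : ℂ) : Prop :=
  HasFDerivAt f (wirtingerCLM a b) z

section Wirtinger

variable {f g : ℂ → ℂ} {a b a' b' z : ℂ}

lemma HasFDerivAt.hasWirtingerAt {L : ℂ →L[ℝ] ℂ} (h : HasFDerivAt f L z)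
    (hL : ∀ v, L v = a * v + b * conj v) : HasWirtingerAt f a b z := by
  have hL' : L = wirtingerCLM a b :=
    ContinuousLinearMap.ext fun v => by rw [hL, wirtingerCLM_apply]
  rwa [HasWirtingerAt, ← hL']

lemma HasDerivAt.hasWirtingerAt (h : HasDerivAt f a z) : HasWirtingerAt f a 0 z :=
  (h.hasFDerivAt.restrictScalars ℝ).hasWirtingerAt fun v => by simp [mul_comm]

lemma HasWirtingerAt.wDz_eq (h : HasWirtingerAt f a b z) : wDz f z = a := by
  rw [wDz, h.fderiv]
  simp only [wirtingerCLM_apply, conj_I, map_one]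
  linear_combination (b - a) / 2 * I_sq

lemma HasWirtingerAt.wDzbar_eq (h : HasWirtingerAt f a b z) : wDzbar f z = b := by
  rw [wDzbar, h.fderiv]
  simp only [wirtingerCLM_apply, conj_I, map_one]
  linear_combination (a - b) / 2 * I_sq

lemma Filter.EventuallyEq.wDz_eq (h : f =ᶠ[𝓝 z] g) : wDz f z = wDz g z := by
  simp only [wDz, h.fderiv_eq]

lemma HasWirtingerAt.congr_of_eventuallyEq (h : HasWirtingerAt f a b z) (hfg : g =ᶠ[𝓝 z] f) :
    HasWirtingerAt g a b z :=
  HasFDerivAt.congr_of_eventuallyEq h hfg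

lemma HasWirtingerAt.add (hf : HasWirtingerAt f a b z) (hg : HasWirtingerAt g a' b' z) :
    HasWirtingerAt (fun w => f w + g w) (a + a') (b + b') z :=
  (HasFDerivAt.add hf hg).hasWirtingerAt fun v => by
    simp only [add_apply, wirtingerCLM_apply]; ring

lemma HasWirtingerAt.sub (hf : HasWirtingerAt f a b z) (hg : HasWirtingerAt g a' b' z) :
    HasWirtingerAt (fun w => f w - g w) (a - a') (b - b') z :=
  (HasFDerivAt.sub hf hg).hasWirtingerAt fun v => by
    simp only [sub_apply, wirtingerCLM_apply]; ring

lemma HasWirtingerAt.const_sub (hf : HasWirtingerAt f a b z) (c : ℂ) :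
    HasWirtingerAt (fun w => c - f w) (-a) (-b) z :=
  (HasFDerivAt.const_sub hf c).hasWirtingerAt fun v => by
    simp only [neg_apply, wirtingerCLM_apply]; ring

lemma HasWirtingerAt.mul (hf : HasWirtingerAt f a b z) (hg : HasWirtingerAt g a' b' z) :
    HasWirtingerAt (fun w => f w * g w) (a * g z + f z * a') (b * g z + f z * b') z :=
  (HasFDerivAt.mul' hf hg).hasWirtingerAt fun v => by
    simp only [op_smul_eq_smul, add_apply, smul_apply,
      wirtingerCLM_apply, smul_eq_mul]
    ring

lemma HasWirtingerAt.div_const (hf : HasWirtingerAt f a b z) (c : ℂ) :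
    HasWirtingerAt (fun w => f w / c) (a / c) (b / c) z :=
  (HasFDerivAt.mul_const hf c⁻¹).hasWirtingerAt fun v => by
    simp only [smul_apply, wirtingerCLM_apply, smul_eq_mul]; ring

lemma HasWirtingerAt.conj (hf : HasWirtingerAt f a b z) :
    HasWirtingerAt (fun w => conj (f w)) (conj b) (conj a) z :=
  ((conjCLE : ℂ →L[ℝ] ℂ).hasFDerivAt.comp z hf).hasWirtingerAt fun v => by simp [mul_comm, add_comm]

lemma HasWirtingerAt.comp {h : ℂ → ℂ} {h' : ℂ} (hf : HasWirtingerAt f a b z)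
    (hh : HasDerivAt h h' (f z)) :
    HasWirtingerAt (fun w => h (f w)) (h' * a) (h' * b) z :=
  (hh.comp_hasFDerivAt z hf).hasWirtingerAt fun v => by
    simp only [smul_apply, wirtingerCLM_apply, smul_eq_mul]; ring

lemma HasWirtingerAt.log_norm (hf : HasWirtingerAt f a b z) (h0 : f z ≠ 0) :
    HasWirtingerAt (fun w => (Real.log ‖f w‖ : ℂ))
      ((a / f z + conj (b / f z)) / 2) ((b / f z + conj (a / f z)) / 2) z := by
  have hlog : (fun w => (Real.log ‖f w‖ : ℂ)) = fun w => log (f w * conj (f w)) / 2 := by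
    funext w
    rw [mul_conj', ← ofReal_pow, ← ofReal_log (by positivity), Real.log_pow]
    push_cast
    ring
  have hslit : f z * conj (f z) ∈ slitPlane := by
    rw [mul_conj', ← ofReal_pow]
    exact ofReal_mem_slitPlane.2 (by positivity)
  have hconj : conj (f z) ≠ 0 := (map_ne_zero _).2 h0
  rw [hlog]
  convert (((hf.mul hf.conj).comp (hasDerivAt_log hslit)).div_const 2) using 1 <;>
  · simp only [map_div₀]
    field_simp

end Wirtinger

lemma one_sub_sq_norm_ne_zero {x : ℂ} (hx : ‖x‖ ≠ 1) : (1 : ℂ) - (‖x‖ : ℂ) ^ 2 ≠ 0 := by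
  rw [sub_ne_zero, ne_comm]
  exact_mod_cast (pow_eq_one_iff_of_nonneg (norm_nonneg x) two_ne_zero).not.2 hx

lemma conj_one_sub_sq_norm (x : ℂ) : conj ((1 : ℂ) - (‖x‖ : ℂ) ^ 2) = 1 - (‖x‖ : ℂ) ^ 2 := by
  simp [conj_ofReal]

lemma sq_norm_one_sub_sq_norm (x : ℂ) :
    (‖1 - (‖x‖ : ℂ) ^ 2‖ : ℂ) ^ 2 = (1 - (‖x‖ : ℂ) ^ 2) ^ 2 := by
  rw [← mul_conj', conj_one_sub_sq_norm, ← sq]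

lemma HasDerivAt.hasWirtingerAt_sq_norm {g : ℂ → ℂ} {g' z : ℂ} (hg : HasDerivAt g g' z) :
    HasWirtingerAt (fun w => (‖g w‖ : ℂ) ^ 2) (g' * conj (g z)) (g z * conj g') z := by
  simp_rw [← mul_conj']
  convert hg.hasWirtingerAt.mul hg.hasWirtingerAt.conj using 1 <;> simp

noncomputable def dzbarLogOneSubSqNorm (g g' : ℂ → ℂ) (w : ℂ) : ℂ :=
  -(g w * conj (g' w)) / (1 - (‖g w‖ : ℂ) ^ 2)

section OneSubSqNorm

variable {g g' : ℂ → ℂ} {g'' w : ℂ}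

lemma hasWirtingerAt_log_norm_one_sub_sq_norm (hg : HasDerivAt g (g' w) w) (hw : ‖g w‖ ≠ 1) :
    HasWirtingerAt (fun u => (Real.log ‖1 - (‖g u‖ : ℂ) ^ 2‖ : ℂ))
      (conj (dzbarLogOneSubSqNorm g g' w)) (dzbarLogOneSubSqNorm g g' w) w := by
  have hD := one_sub_sq_norm_ne_zero hw
  convert (hg.hasWirtingerAt_sq_norm.const_sub 1).log_norm hD using 1 <;>
  · simp only [dzbarLogOneSubSqNorm, map_div₀, map_neg, map_mul, conj_conj, conj_one_sub_sq_norm]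
    field_simp
    ring

lemma hasWirtingerAt_dzbarLogOneSubSqNorm (hg : HasDerivAt g (g' w) w) (hg' : HasDerivAt g' g'' w)
    (hw : ‖g w‖ ≠ 1) :
    HasWirtingerAt (dzbarLogOneSubSqNorm g g')
      (-((‖g' w‖ : ℂ) ^ 2 / (1 - (‖g w‖ : ℂ) ^ 2) ^ 2))
      (-(g w * conj g'') / (1 - (‖g w‖ : ℂ) ^ 2)
        - (g w * conj (g' w)) ^ 2 / (1 - (‖g w‖ : ℂ) ^ 2) ^ 2) w := by
  have hD := one_sub_sq_norm_ne_zero hw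
  have hnum := hg.hasWirtingerAt.mul hg'.hasWirtingerAt.conj
  have hden := (hg.hasWirtingerAt_sq_norm.const_sub 1).comp (hasDerivAt_inv hD)
  convert (hnum.mul hden).const_sub 0 using 1
  · funext u; simp [dzbarLogOneSubSqNorm, div_eq_mul_inv]
  all_goals
    simp only [map_zero, ← mul_conj'] at hD ⊢
    field_simp
    ring

end OneSubSqNorm

lemma log_norm_Dh {φ : ℂ → ℂ} {u : ℂ} (hu : ‖u‖ ≠ 1) (hφu : ‖φ u‖ ≠ 1) (hd : deriv φ u ≠ 0) :
    Real.log ‖Dh φ u‖ = Real.log ‖1 - (‖u‖ : ℂ) ^ 2‖ + Real.log ‖deriv φ u‖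
      - Real.log ‖1 - (‖φ u‖ : ℂ) ^ 2‖ := by
  have h1 := norm_ne_zero_iff.2 (one_sub_sq_norm_ne_zero hu)
  have h2 := norm_ne_zero_iff.2 hd
  have h3 := norm_ne_zero_iff.2 (one_sub_sq_norm_ne_zero hφu)
  rw [Dh, norm_div, norm_mul, Real.log_div (mul_ne_zero h1 h2) h3, Real.log_mul h1 h2]

lemma sq_norm_Dh (φ : ℂ → ℂ) (u : ℂ) :
    (‖Dh φ u‖ : ℂ) ^ 2
      = (1 - (‖u‖ : ℂ) ^ 2) ^ 2 * (‖deriv φ u‖ : ℂ) ^ 2 / (1 - (‖φ u‖ : ℂ) ^ 2) ^ 2 := by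
  rw [Dh, norm_div, norm_mul, ofReal_div, ofReal_mul, div_pow, mul_pow,
    sq_norm_one_sub_sq_norm, sq_norm_one_sub_sq_norm]

noncomputable def dzbarLogNormDh (φ : ℂ → ℂ) (u : ℂ) : ℂ :=
  dzbarLogOneSubSqNorm (fun x => x) (fun _ => 1) u + conj (deriv (deriv φ) u / deriv φ u) / 2
    - dzbarLogOneSubSqNorm φ (deriv φ) u

section Dh

variable {φ : ℂ → ℂ} {u : ℂ}

lemma wDzbar_log_norm_Dh (hφ : AnalyticAt ℂ φ u) (hu : ‖u‖ ≠ 1) (hφu : ‖φ u‖ ≠ 1)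
    (hd : deriv φ u ≠ 0) :
    wDzbar (fun x => (Real.log ‖Dh φ x‖ : ℂ)) u = dzbarLogNormDh φ u := by
  have hφ' := hφ.deriv
  have hz := hasWirtingerAt_log_norm_one_sub_sq_norm (g' := fun _ => 1) (hasDerivAt_id' u) hu
  have hφ'term := hφ'.differentiableAt.hasDerivAt.hasWirtingerAt.log_norm hd
  have hφterm := hasWirtingerAt_log_norm_one_sub_sq_norm hφ.differentiableAt.hasDerivAt hφu
  have hsum := (hz.add hφ'term).sub hφterm
  have hnear : ∀ᶠ x in 𝓝 u, ‖x‖ ≠ 1 ∧ ‖φ x‖ ≠ 1 ∧ deriv φ x ≠ 0 :=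
    (continuous_norm.continuousAt.eventually_ne hu).and
      (((continuous_norm.continuousAt.comp hφ.continuousAt).eventually_ne hφu).and
        (hφ'.continuousAt.eventually_ne hd))
  refine (hsum.congr_of_eventuallyEq (hnear.mono fun x ⟨hx, hφx, hdx⟩ => ?_)).wDzbar_eq.trans ?_
  · simp only [log_norm_Dh hx hφx hdx]
    push_cast
    ring
  · simp [dzbarLogNormDh]

lemma wDz_dzbarLogNormDh (hφ : AnalyticAt ℂ φ u) (hu : ‖u‖ ≠ 1) (hφu : ‖φ u‖ ≠ 1)
    (hd : deriv φ u ≠ 0) :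
    wDz (dzbarLogNormDh φ) u = -((1 - (‖Dh φ u‖ : ℂ) ^ 2) / (1 - (‖u‖ : ℂ) ^ 2) ^ 2) := by
  have hφ' := hφ.deriv
  have hφ'' := hφ'.deriv
  have hz := hasWirtingerAt_dzbarLogOneSubSqNorm (g' := fun _ => 1) (hasDerivAt_id' u)
    (hasDerivAt_const u 1) hu
  -- `conj (φ'' / φ')` is antiholomorphic, so its `∂` vanishes: `log |φ'|` is harmonic.
  have hφ'term := (hφ''.differentiableAt.hasDerivAt.div hφ'.differentiableAt.hasDerivAt
    hd).hasWirtingerAt.conj.div_const 2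
  have hφterm := hasWirtingerAt_dzbarLogOneSubSqNorm hφ.differentiableAt.hasDerivAt
    hφ'.differentiableAt.hasDerivAt hφu
  have hsum : HasWirtingerAt (dzbarLogNormDh φ) _ _ u := (hz.add hφ'term).sub hφterm
  have hD := one_sub_sq_norm_ne_zero hu
  have hφD := one_sub_sq_norm_ne_zero hφu
  rw [hsum.wDz_eq, sq_norm_Dh]
  simp only [norm_one, ofReal_one, one_pow, map_zero, zero_div, add_zero]
  field_simp
  ring

end Dh

theorem mixed_partial_log_Dh_general
    (φ : ℂ → ℂ)
    (hφ : DifferentiableOn ℂ φ (ball (0:ℂ) 1))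
    (hφm : MapsTo φ (ball (0:ℂ) 1) (ball (0:ℂ) 1))
    (z₀ : ℂ) (hz₀ : z₀ ∈ ball (0:ℂ) 1) (hd : deriv φ z₀ ≠ 0) :
    wDz (fun w => wDzbar (fun u => ((Real.log (‖Dh φ u‖) : ℝ) : ℂ)) w) z₀
      = -((1 - ((‖Dh φ z₀‖ : ℝ) : ℂ)^2) / ((1 - (‖z₀‖ : ℂ)^2)^2) ) := by
  have hA : ∀ u ∈ ball (0:ℂ) 1, AnalyticAt ℂ φ u := hφ.analyticOnNhd isOpen_ball
  have hnorm : ∀ u ∈ ball (0:ℂ) 1, ‖u‖ ≠ 1 ∧ ‖φ u‖ ≠ 1 := fun u hu =>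
    ⟨(mem_ball_zero_iff.1 hu).ne, (mem_ball_zero_iff.1 (hφm hu)).ne⟩
  have hdzbar : (fun w => wDzbar (fun u => (Real.log ‖Dh φ u‖ : ℂ)) w) =ᶠ[𝓝 z₀]
      dzbarLogNormDh φ := by
    filter_upwards [isOpen_ball.mem_nhds hz₀,
      (hA z₀ hz₀).deriv.continuousAt.eventually_ne hd] with u hu hdu
    exact wDzbar_log_norm_Dh (hA u hu) (hnorm u hu).1 (hnorm u hu).2 hdu
  rw [hdzbar.wDz_eq]
  exact wDz_dzbarLogNormDh (hA z₀ hz₀) (hnorm z₀ hz₀).1 (hnorm z₀ hz₀).2 hd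

theorem mixed_partial_log_Dh
    (φ : ℂ → ℂ)
    (hφ : DifferentiableOn ℂ φ (ball (0:ℂ) 1))
    (hφm : MapsTo φ (ball (0:ℂ) 1) (ball (0:ℂ) 1))
    (hφnc : ¬ ∃ c, ∀ z ∈ ball (0:ℂ) 1, φ z = c)
    (z₀ : ℂ) (hz₀ : z₀ ∈ ball (0:ℂ) 1) (hd : deriv φ z₀ ≠ 0) :
    wDz (fun w => wDzbar (fun u => ((Real.log (‖Dh φ u‖) : ℝ) : ℂ)) w) z₀
      = -((1 - ((‖Dh φ z₀‖ : ℝ) : ℂ)^2) / ((1 - (‖z₀‖ : ℂ)^2)^2) ) :=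
  mixed_partial_log_Dh_general φ hφ hφm z₀ hz₀ hd
end

section
/- Let φ: 𝔻 → 𝔻 be analytic and not constant. At every point z where φ'(z) ≠ 0, the Wirtinger derivative of A_φ with respect to z̄ satisfies (1-|z|²)·∂A_φ/∂z̄ = -z·A_φ(z) + |D_φ(z)|² - 1. -/
open Complex Metric Set Filter Asymptotics Topology

/-! The pair `(∂f, ∂̄f)` obeys the sum, product, quotient and holomorphic chain rules, has
`∂̄f = 0` for holomorphic `f`, and becomes `(conj ∂̄f, conj ∂f)` under conjugation. Running the
formula for `A_φ` through these rules, with `φ''/φ'` and `φ'` holomorphic and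
`∂̄(1 - |w|²) = -w`, gives `∂̄A_φ` in closed form; the identity is then a rational identity in
`z, z̄, φ, φ̄, φ', φ̄', φ''` once `|z|² = z̄ z` is substituted. -/

/-- `f` has real derivative `v ↦ a v + b v̄` at `z`, i.e. `∂f = a` and `∂̄f = b`. -/
def HasWirtingerDerivAt (f : ℂ → ℂ) (a b z : ℂ) : Prop :=
  HasFDerivAt f (a • (1 : ℂ →L[ℝ] ℂ) + b • (conjCLE : ℂ →L[ℝ] ℂ)) z

theorem HasDerivAt.hasWirtingerDerivAt {f : ℂ → ℂ} {a z : ℂ} (h : HasDerivAt f a z) :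
    HasWirtingerDerivAt f a 0 z := by
  refine (h.hasFDerivAt.restrictScalars ℝ).congr_fderiv ?_
  ext v; simp [mul_comm]

namespace HasWirtingerDerivAt

variable {f g : ℂ → ℂ} {a b c d z : ℂ}

theorem wDzbar_eq (h : HasWirtingerDerivAt f a b z) : wDzbar f z = b := by
  simp only [wDzbar, h.fderiv, add_apply, smul_apply, one_apply_eq_self,
    ContinuousLinearEquiv.coe_coe, conjCLE_apply, map_one, conj_I, smul_eq_mul]
  ring_nf
  rw [I_sq]
  ring

theorem add (hf : HasWirtingerDerivAt f a b z) (hg : HasWirtingerDerivAt g c d z) :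
    HasWirtingerDerivAt (fun w => f w + g w) (a + c) (b + d) z := by
  refine (hf.fun_add hg).congr_fderiv ?_
  ext v; simp; ring

theorem sub (hf : HasWirtingerDerivAt f a b z) (hg : HasWirtingerDerivAt g c d z) :
    HasWirtingerDerivAt (fun w => f w - g w) (a - c) (b - d) z := by
  refine (hf.fun_sub hg).congr_fderiv ?_
  ext v; simp; ring

theorem mul (hf : HasWirtingerDerivAt f a b z) (hg : HasWirtingerDerivAt g c d z) :
    HasWirtingerDerivAt (fun w => f w * g w) (a * g z + f z * c) (b * g z + f z * d) z := by
  refine (hf.fun_mul hg).congr_fderiv ?_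
  ext v; simp; ring

theorem conj (h : HasWirtingerDerivAt f a b z) :
    HasWirtingerDerivAt (fun w => starRingEnd ℂ (f w)) (starRingEnd ℂ b) (starRingEnd ℂ a) z := by
  refine ((conjCLE : ℂ →L[ℝ] ℂ).hasFDerivAt.comp z h).congr_fderiv ?_
  ext v; simp; ring

theorem _root_.HasDerivAt.comp_hasWirtingerDerivAt {g' : ℂ} (hg : HasDerivAt g g' (f z))
    (hf : HasWirtingerDerivAt f a b z) :
    HasWirtingerDerivAt (fun w => g (f w)) (g' * a) (g' * b) z := by
  refine (hg.comp_hasFDerivAt z hf).congr_fderiv ?_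
  ext v; simp; ring

theorem div (hf : HasWirtingerDerivAt f a b z) (hg : HasWirtingerDerivAt g c d z) (hgz : g z ≠ 0) :
    HasWirtingerDerivAt (fun w => f w / g w)
      ((a * g z - f z * c) / g z ^ 2) ((b * g z - f z * d) / g z ^ 2) z := by
  convert hf.mul ((hasDerivAt_inv hgz).comp_hasWirtingerDerivAt hg) using 1
  · simp only [div_eq_mul_inv]
  all_goals field_simp; ring

theorem norm_sq (h : HasWirtingerDerivAt f a b z) :
    HasWirtingerDerivAt (fun w => (‖f w‖ : ℂ) ^ 2)
      (a * starRingEnd ℂ (f z) + f z * starRingEnd ℂ b)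
      (b * starRingEnd ℂ (f z) + f z * starRingEnd ℂ a) z := by
  simpa only [mul_conj'] using h.mul h.conj

end HasWirtingerDerivAt

theorem one_sub_sq_norm_ne_zero_s6 {w : ℂ} (hw : ‖w‖ < 1) : 1 - (‖w‖ : ℂ) ^ 2 ≠ 0 := by
  have h : ‖w‖ ^ 2 < 1 := pow_lt_one₀ (norm_nonneg w) hw two_ne_zero
  exact_mod_cast (sub_pos.2 h).ne'

theorem wDzbar_Ah {φ : ℂ → ℂ} {z : ℂ} (hφ : AnalyticAt ℂ φ z) (hd : deriv φ z ≠ 0)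
    (hT : 1 - (‖φ z‖ : ℂ) ^ 2 ≠ 0) :
    wDzbar (Ah φ) z = -z / 2 * (deriv (deriv φ) z / deriv φ z) - 1
      + deriv φ z * (-z * starRingEnd ℂ (φ z) * (1 - (‖φ z‖ : ℂ) ^ 2)
          + (1 - (‖z‖ : ℂ) ^ 2) * starRingEnd ℂ (deriv φ z)) / (1 - (‖φ z‖ : ℂ) ^ 2) ^ 2 := by
  have hφ₁ : HasDerivAt φ (deriv φ z) z := hφ.differentiableAt.hasDerivAt
  have hφ₂ : HasDerivAt (deriv φ) (deriv (deriv φ) z) z := hφ.deriv.differentiableAt.hasDerivAt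
  have hQ : DifferentiableAt ℂ (fun w => deriv (deriv φ) w / deriv φ w) z :=
    hφ.deriv.deriv.differentiableAt.div hφ₂.differentiableAt hd
  have hP := (hasDerivAt_const z (1 : ℂ)).hasWirtingerDerivAt.sub
    (hasDerivAt_id' z).hasWirtingerDerivAt.norm_sq
  have hA : HasWirtingerDerivAt (Ah φ) _ _ z :=
    (((hP.div (hasDerivAt_const z (2 : ℂ)).hasWirtingerDerivAt two_ne_zero).mul
      hQ.hasDerivAt.hasWirtingerDerivAt).sub (hasDerivAt_id' z).hasWirtingerDerivAt.conj).add
    (((hP.mul hφ₁.hasWirtingerDerivAt.conj).mul hφ₂.hasWirtingerDerivAt).div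
      ((hasDerivAt_const z (1 : ℂ)).hasWirtingerDerivAt.sub hφ₁.hasWirtingerDerivAt.norm_sq) hT)
  rw [hA.wDzbar_eq]
  rw [← conj_mul' (φ z)] at hT ⊢
  simp only [map_one]
  field_simp
  ring

theorem wirtinger_dzbar_of_A_general
    (φ : ℂ → ℂ)
    (hφ : DifferentiableOn ℂ φ (ball (0:ℂ) 1))
    (hφm : MapsTo φ (ball (0:ℂ) 1) (ball (0:ℂ) 1)) :
    ∀ z ∈ ball (0:ℂ) 1, deriv φ z ≠ 0 →
      (1 - (‖z‖ : ℂ)^2) * wDzbar (Ah φ) z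
        = -z * Ah φ z + ((‖Dh φ z‖ : ℝ) : ℂ)^2 - 1 := by
  intro z hz hd
  have hT : 1 - (‖φ z‖ : ℂ) ^ 2 ≠ 0 := one_sub_sq_norm_ne_zero_s6 (by simpa using hφm hz)
  rw [wDzbar_Ah (hφ.analyticOnNhd isOpen_ball z hz) hd hT, ← mul_conj' (Dh φ z)]
  simp only [Ah, Dh, map_div₀, map_mul, map_sub, map_one, map_pow, conj_ofReal]
  rw [← conj_mul' z]
  field_simp
  ring

theorem wirtinger_dzbar_of_A
    (φ : ℂ → ℂ)
    (hφ : DifferentiableOn ℂ φ (ball (0:ℂ) 1))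
    (hφm : MapsTo φ (ball (0:ℂ) 1) (ball (0:ℂ) 1))
    (hφnc : ¬ ∃ c, ∀ z ∈ ball (0:ℂ) 1, φ z = c) :
    ∀ z ∈ ball (0:ℂ) 1, deriv φ z ≠ 0 →
      (1 - (‖z‖ : ℂ)^2) * wDzbar (Ah φ) z
        = -z * Ah φ z + ((‖Dh φ z‖ : ℝ) : ℂ)^2 - 1 :=
  wirtinger_dzbar_of_A_general φ hφ hφm
end

section
/- Let φ(z) = e^{-g(z)} with g(z) = ((1+z)/(1-z))^a, 0 < a < 1 (principal branch). Then A_φ(z) ≠ 0 for every z in the unit disk, where A_φ(z) = ((1-|z|²)/2)φ''(z)/φ'(z) - z̄ + (1-|z|²)·conj(φ(z))φ'(z)/(1-|φ(z)|²). -/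
open Complex Metric Set Filter Asymptotics Topology

/-!
Since `0 < a < 1`, `u = Re g(z)` is positive, and one has `|φ(z)|² = e^{-2u}`, `φ''/φ' = g''/g' - g'` and
`g''/g' = 2(a + z)/(1 - z²)`, so that `(1 - z²) A_φ(z) = (z - z̄) + a(1 - |z|²)(1 - g(z) coth u)`.
Its real part `a(1 - |z|²)(1 - u coth u)` is negative because `tanh u < u`.
-/

open ComplexConjugate

theorem Real.sinh_lt_mul_cosh {x : ℝ} (hx : 0 < x) : Real.sinh x < x * Real.cosh x := by
  have hmono : StrictMonoOn (fun y : ℝ => y * Real.cosh y - Real.sinh y) (Ici 0) := by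
    refine strictMonoOn_of_deriv_pos (convex_Ici 0) (by fun_prop) fun y hy => ?_
    rw [interior_Ici] at hy
    have h : HasDerivAt (fun y : ℝ => y * Real.cosh y - Real.sinh y) (y * Real.sinh y) y := by
      refine (((hasDerivAt_id' y).mul (Real.hasDerivAt_cosh y)).sub
        (Real.hasDerivAt_sinh y)).congr_deriv ?_
      ring
    rw [h.deriv]
    exact mul_pos hy (Real.sinh_pos_iff.2 hy)
  simpa using hmono (mem_Ici.2 le_rfl) hx.le hx

theorem Real.tanh_pos {x : ℝ} (hx : 0 < x) : 0 < Real.tanh x := by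
  rw [Real.tanh_eq_sinh_div_cosh]
  exact div_pos (Real.sinh_pos_iff.2 hx) (Real.cosh_pos x)

theorem Real.tanh_lt_self {x : ℝ} (hx : 0 < x) : Real.tanh x < x := by
  rw [Real.tanh_eq_sinh_div_cosh, div_lt_iff₀ (Real.cosh_pos x)]
  exact Real.sinh_lt_mul_cosh hx

theorem Real.one_add_two_div_exp_two_mul_sub_one {x : ℝ} (hx : x ≠ 0) :
    1 + 2 / (Real.exp (2 * x) - 1) = (Real.tanh x)⁻¹ := by
  have h2 : Real.exp x - (Real.exp x)⁻¹ ≠ 0 := by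
    rw [sub_ne_zero, ← Real.exp_neg, Ne, Real.exp_eq_exp]; intro h; exact hx (by linarith)
  have h1 : Real.exp x ^ 2 - 1 ≠ 0 := by
    contrapose! h2; field_simp; linear_combination h2
  rw [Real.tanh_eq, inv_div, Real.exp_neg, show 2 * x = x + x by ring, Real.exp_add, ← sq]
  field_simp
  ring

theorem Real.one_lt_mul_one_add_two_div_exp_two_mul_sub_one {x : ℝ} (hx : 0 < x) :
    1 < x * (1 + 2 / (Real.exp (2 * x) - 1)) := by
  rw [Real.one_add_two_div_exp_two_mul_sub_one hx.ne', ← div_eq_mul_inv,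
    one_lt_div (Real.tanh_pos hx)]
  exact Real.tanh_lt_self hx

theorem Complex.re_cpow_ofReal_pos {w : ℂ} (hw : 0 < w.re) {a : ℝ} (ha : |a| ≤ 1) :
    0 < (w ^ (a : ℂ)).re := by
  have hw0 : w ≠ 0 := fun h => by simp [h] at hw
  rw [cpow_ofReal_re]
  refine mul_pos (Real.rpow_pos_of_pos (norm_pos_iff.2 hw0) _) (Real.cos_pos_of_mem_Ioo ?_)
  rw [mem_Ioo, ← abs_lt, abs_mul]
  calc |w.arg| * |a| ≤ |w.arg| := mul_le_of_le_one_right (abs_nonneg _) ha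
    _ < Real.pi / 2 := abs_arg_lt_pi_div_two_iff.2 (Or.inl hw)

theorem Complex.re_one_add_div_one_sub (z : ℂ) :
    ((1 + z) / (1 - z)).re = (1 - ‖z‖ ^ 2) / ‖1 - z‖ ^ 2 := by
  rw [div_re, ← add_div, ← normSq_eq_norm_sq, ← normSq_eq_norm_sq, normSq_apply, normSq_apply]
  simp only [add_re, one_re, sub_re, add_im, one_im, sub_im]
  ring

theorem Ah_exp_neg {g g' : ℂ → ℂ} {z g'' : ℂ} (hg : ∀ᶠ x in 𝓝 z, HasDerivAt g (g' x) x)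
    (hg' : HasDerivAt g' g'' z) (hg'0 : g' z ≠ 0) :
    Ah (fun x => exp (-g x)) z = (1 - (‖z‖ : ℂ) ^ 2) / 2 * (g'' / g' z - g' z) - conj z
      - (1 - (‖z‖ : ℂ) ^ 2) * g' z / (Real.exp (2 * (g z).re) - 1) := by
  set φ : ℂ → ℂ := fun x => exp (-g x)
  have hφ : ∀ᶠ x in 𝓝 z, HasDerivAt φ (-g' x * φ x) x :=
    hg.mono fun x hx => by simpa [φ, mul_comm] using hx.neg.cexp
  have hd1 : deriv φ z = -g' z * φ z := hφ.self_of_nhds.deriv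
  have hd2 : deriv (deriv φ) z = (g' z ^ 2 - g'') * φ z := by
    rw [EventuallyEq.deriv_eq (hφ.mono fun x hx => hx.deriv)]
    refine (hg'.neg.mul hφ.self_of_nhds).deriv.trans ?_
    rw [Pi.neg_apply]
    ring
  have hφ0 : φ z ≠ 0 := exp_ne_zero _
  have hlog : (g' z ^ 2 - g'') * φ z / (-g' z * φ z) = g'' / g' z - g' z := by
    field_simp
    ring
  have hnorm : (‖φ z‖ : ℂ) ^ 2 = (Real.exp (2 * (g z).re) : ℂ)⁻¹ := by
    rw [norm_exp, ← ofReal_pow, ← Real.exp_nat_mul, ← ofReal_inv, ← Real.exp_neg, neg_re]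
    ring_nf
  have hquot : conj (φ z) * φ z / (1 - (‖φ z‖ : ℂ) ^ 2) = 1 / (Real.exp (2 * (g z).re) - 1) := by
    rw [conj_mul', hnorm, ← one_div_div, inv_eq_one_div]
    congr 1
    field_simp
  rw [Ah, hd1, hd2, hlog]
  linear_combination (-(1 - (‖z‖ : ℂ) ^ 2) * g' z) * hquot

noncomputable def lensMap (a : ℝ) (z : ℂ) : ℂ := ((1 + z) / (1 - z)) ^ (a : ℂ)

section lensMap

variable {a : ℝ} {z : ℂ}

lemma one_sub_ne_zero_of_norm_lt_one (hz : ‖z‖ < 1) : 1 - z ≠ 0 := by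
  rw [sub_ne_zero]; rintro rfl; simp at hz

lemma one_sub_sq_ne_zero_of_norm_lt_one (hz : ‖z‖ < 1) : 1 - z ^ 2 ≠ 0 := by
  rw [show 1 - z ^ 2 = (1 - z) * (1 - -z) by ring]
  exact mul_ne_zero (one_sub_ne_zero_of_norm_lt_one hz)
    (one_sub_ne_zero_of_norm_lt_one (by rwa [norm_neg]))

lemma re_one_add_div_one_sub_pos (hz : ‖z‖ < 1) : 0 < ((1 + z) / (1 - z)).re := by
  rw [re_one_add_div_one_sub]
  have : ‖z‖ ^ 2 < 1 := pow_lt_one₀ (norm_nonneg z) hz two_ne_zero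
  exact div_pos (by linarith) (pow_pos (norm_pos_iff.2 (one_sub_ne_zero_of_norm_lt_one hz)) 2)

lemma re_lensMap_pos (ha : |a| ≤ 1) (hz : ‖z‖ < 1) : 0 < (lensMap a z).re :=
  re_cpow_ofReal_pos (re_one_add_div_one_sub_pos hz) ha

lemma hasDerivAt_lensMap (a : ℝ) (hz : ‖z‖ < 1) :
    HasDerivAt (lensMap a) (2 * a * lensMap a z / (1 - z ^ 2)) z := by
  have h1 := one_sub_ne_zero_of_norm_lt_one hz
  have hw := re_one_add_div_one_sub_pos hz
  have hw0 : (1 + z) / (1 - z) ≠ 0 := fun h => by simp [h] at hw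
  have hcayley : HasDerivAt (fun y : ℂ => (1 + y) / (1 - y)) (2 / (1 - z) ^ 2) z := by
    refine (((hasDerivAt_id' z).const_add 1).div ((hasDerivAt_id' z).const_sub 1) h1).congr_deriv ?_
    ring
  refine (hcayley.cpow_const (Or.inl hw)).congr_deriv ?_
  have h2 : 1 + z ≠ 0 := fun h => hw0 (by simp [h])
  rw [cpow_sub _ _ hw0, cpow_one, lensMap]
  field_simp [one_sub_sq_ne_zero_of_norm_lt_one hz]
  ring

lemma hasDerivAt_deriv_lensMap (hz : ‖z‖ < 1) :
    HasDerivAt (fun x => 2 * a * lensMap a x / (1 - x ^ 2))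
      (4 * a * (a + z) * lensMap a z / (1 - z ^ 2) ^ 2) z := by
  refine (((hasDerivAt_lensMap a hz).const_mul (2 * (a : ℂ))).div
    ((hasDerivAt_pow 2 z).const_sub 1) (one_sub_sq_ne_zero_of_norm_lt_one hz)).congr_deriv ?_
  field_simp [one_sub_sq_ne_zero_of_norm_lt_one hz]
  ring

lemma lensMap_ne_zero (a : ℝ) (hz : ‖z‖ < 1) : lensMap a z ≠ 0 := by
  have hw := re_one_add_div_one_sub_pos hz
  exact fun h => by simp [((cpow_eq_zero_iff _ _).1 h).1] at hw

lemma re_one_sub_sq_mul_Ah_lensMap (ha : a ≠ 0) (hz : ‖z‖ < 1) :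
    ((1 - z ^ 2) * Ah (fun x => exp (-lensMap a x)) z).re = a * (1 - ‖z‖ ^ 2) *
      (1 - (lensMap a z).re * (1 + 2 / (Real.exp (2 * (lensMap a z).re) - 1))) := by
  set G := lensMap a z
  set c : ℝ := 1 + 2 / (Real.exp (2 * G.re) - 1)
  have h3 := one_sub_sq_ne_zero_of_norm_lt_one hz
  have hG : G ≠ 0 := lensMap_ne_zero a hz
  have haC : (a : ℂ) ≠ 0 := ofReal_ne_zero.2 ha
  have hlog : 4 * a * (a + z) * G / (1 - z ^ 2) ^ 2 / (2 * a * G / (1 - z ^ 2))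
      = 2 * (a + z) / (1 - z ^ 2) := by
    field_simp
    ring
  have key : (1 - z ^ 2) * Ah (fun x => exp (-lensMap a x)) z
      = (z - conj z) + ((a * (1 - ‖z‖ ^ 2) : ℝ) : ℂ) * (1 - G * (c : ℂ)) := by
    have hg : ∀ᶠ x in 𝓝 z, HasDerivAt (lensMap a) (2 * a * lensMap a x / (1 - x ^ 2)) x := by
      filter_upwards [isOpen_ball.mem_nhds (mem_ball_zero_iff.2 hz)] with x hx
      exact hasDerivAt_lensMap a (mem_ball_zero_iff.1 hx)
    rw [Ah_exp_neg hg (hasDerivAt_deriv_lensMap hz) (by simp [ha, lensMap_ne_zero a hz, h3]), hlog]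
    push_cast [c]
    field_simp
    linear_combination z * mul_conj' z
  rw [key]
  simp only [add_re, sub_re, conj_re, sub_self, zero_add, re_ofReal_mul, one_re, re_mul_ofReal, G, c]

end lensMap

theorem exp_lens_map_A_nonvanishing (a : ℝ) (ha : 0 < a) (ha1 : a < 1) :
    let g : ℂ → ℂ := fun z => ((1 + z) / (1 - z)) ^ (a : ℂ)
    let φ : ℂ → ℂ := fun z => Complex.exp (-(g z))
    ∀ z ∈ ball (0:ℂ) 1, Ah φ z ≠ 0 := by
  intro g φ z hz hA
  rw [mem_ball_zero_iff] at hz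
  have hu : 0 < (lensMap a z).re := re_lensMap_pos (abs_le.2 ⟨by linarith, ha1.le⟩) hz
  have hdisk : 0 < a * (1 - ‖z‖ ^ 2) :=
    mul_pos ha (by nlinarith [pow_lt_one₀ (norm_nonneg z) hz two_ne_zero])
  have hre : ((1 - z ^ 2) * Ah φ z).re = _ := re_one_sub_sq_mul_Ah_lensMap ha.ne' hz
  rw [hA, mul_zero, zero_re] at hre
  nlinarith [Real.one_lt_mul_one_add_two_div_exp_two_mul_sub_one hu]
end
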